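/- Let M = (S,A,P,r,s₀,H) and M̂ = (S,A,P̂,r,s₀,H) be finite-horizon MDPs with the same reward r ∈ [0,1]^{S×A}. Then for any policy π, V^π_{M̂}(s₀) ≤ 3 V^π_M(s₀) + 9H² E_{P,π}[ ∑_{h=0}^{H−1} D²_H(P̂(·|s_h,a_h), P(·|s_h,a_h)) | s₀ ]. -/

import Mathlib

open Finset

variable {S A : Type*} [Fintype S] [Fintype A]

/-- Value function defined by the Bellman backward recursion:
`val H π P r h s` is the expected sum of rewards from step `h` to `H-1`
starting at `s`, under policy `π` and dynamics `P` (with `P s a s'` the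
probability of transitioning to `s'` from `(s,a)`). -/
def val (H : ℕ) (π : ℕ → S → A → ℝ) (P : S → A → S → ℝ) (r : S → A → ℝ) :
    ℕ → S → ℝ
  | h, s =>
    if _ : h < H then
      ∑ a, π h s a * (r s a + ∑ s', P s a s' * val H π P r (h + 1) s')
    else 0
  termination_by h _ => H - h
  decreasing_by omega

lemma val_nonneg_aux (H : ℕ) (π : ℕ → S → A → ℝ) (P : S → A → S → ℝ) (r : S → A → ℝ)
    (hπ0 : ∀ h s a, 0 ≤ π h s a) (hP0 : ∀ s a s', 0 ≤ P s a s')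
    (hr0 : ∀ s a, 0 ≤ r s a) :
    ∀ k h s, H - h ≤ k → 0 ≤ val H π P r h s := by
  intro k
  induction k with
  | zero =>
    intro h s hk
    rw [_root_.val, dif_neg (by omega)]
  | succ k ih =>
    intro h s hk
    by_cases hlt : h < H
    · rw [_root_.val, dif_pos hlt]
      apply Finset.sum_nonneg
      intro a _
      apply mul_nonneg (hπ0 _ _ _)
      apply add_nonneg (hr0 _ _)
      apply Finset.sum_nonneg
      intro s' _
      exact mul_nonneg (hP0 _ _ _) (ih (h+1) s' (by omega))
    · rw [_root_.val, dif_neg hlt]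

lemma val_nonneg (H : ℕ) (π : ℕ → S → A → ℝ) (P : S → A → S → ℝ) (r : S → A → ℝ)
    (hπ0 : ∀ h s a, 0 ≤ π h s a) (hP0 : ∀ s a s', 0 ≤ P s a s')
    (hr0 : ∀ s a, 0 ≤ r s a) (h : ℕ) (s : S) : 0 ≤ val H π P r h s :=
  val_nonneg_aux H π P r hπ0 hP0 hr0 (H - h) h s le_rfl

lemma val_le_aux (H : ℕ) (π : ℕ → S → A → ℝ) (P : S → A → S → ℝ) (r : S → A → ℝ)
    (hπ0 : ∀ h s a, 0 ≤ π h s a) (hπ1 : ∀ h s, ∑ a, π h s a = 1)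
    (hP0 : ∀ s a s', 0 ≤ P s a s') (hP1 : ∀ s a, ∑ s', P s a s' = 1)
    (hr0 : ∀ s a, 0 ≤ r s a) (hr1 : ∀ s a, r s a ≤ 1) :
    ∀ k h s, H - h ≤ k → val H π P r h s ≤ ((H - h : ℕ) : ℝ) := by
  intro k
  induction k with
  | zero =>
    intro h s hk
    rw [_root_.val, dif_neg (by omega)]
    positivity
  | succ k ih =>
    intro h s hk
    by_cases hlt : h < H
    · rw [_root_.val, dif_pos hlt]
      have hcast : ((H - h : ℕ) : ℝ) = ((H - (h+1) : ℕ) : ℝ) + 1 := by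
        have : (H - h : ℕ) = (H - (h+1) : ℕ) + 1 := by omega
        rw [this]; push_cast; ring
      calc ∑ a, π h s a * (r s a + ∑ s', P s a s' * val H π P r (h + 1) s')
          ≤ ∑ a, π h s a * (1 + ((H - (h+1) : ℕ) : ℝ)) := by
            apply Finset.sum_le_sum
            intro a _
            apply mul_le_mul_of_nonneg_left _ (hπ0 _ _ _)
            apply add_le_add (hr1 _ _)
            calc ∑ s', P s a s' * val H π P r (h + 1) s'
                ≤ ∑ s', P s a s' * ((H - (h+1) : ℕ) : ℝ) := by
                  apply Finset.sum_le_sum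
                  intro s' _
                  exact mul_le_mul_of_nonneg_left (ih (h+1) s' (by omega)) (hP0 _ _ _)
              _ = ((H - (h+1) : ℕ) : ℝ) := by rw [← Finset.sum_mul, hP1, one_mul]
        _ = ((H - h : ℕ) : ℝ) := by rw [← Finset.sum_mul, hπ1, one_mul, hcast]; ring
    · rw [_root_.val, dif_neg hlt]; positivity

lemma step_bound (Hr : ℝ) (hHr : 1 ≤ Hr) (p q f : S → ℝ) (B : ℝ) (hB : 0 ≤ B)
    (hp : ∀ i, 0 ≤ p i) (hq : ∀ i, 0 ≤ q i)
    (hf0 : ∀ i, 0 ≤ f i) (hfB : ∀ i, f i ≤ B) :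
    ∑ i, q i * f i ≤ (1 + 1/Hr) * ∑ i, p i * f i +
      (2*Hr+1)^2/(4*Hr) * B * ∑ i, (Real.sqrt (q i) - Real.sqrt (p i))^2 := by
  set X := ∑ i, p i * f i with hX
  set Y := ∑ i, q i * f i with hY
  set d := ∑ i, (Real.sqrt (q i) - Real.sqrt (p i))^2 with hd
  have hX0 : 0 ≤ X := Finset.sum_nonneg fun i _ => mul_nonneg (hp i) (hf0 i)
  have hY0 : 0 ≤ Y := Finset.sum_nonneg fun i _ => mul_nonneg (hq i) (hf0 i)
  have hd0 : 0 ≤ d := Finset.sum_nonneg fun i _ => sq_nonneg _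
  have key : Y - X = ∑ i, (Real.sqrt (q i) - Real.sqrt (p i)) *
      ((Real.sqrt (q i) + Real.sqrt (p i)) * f i) := by
    rw [hY, hX, ← Finset.sum_sub_distrib]
    apply Finset.sum_congr rfl
    intro i _
    have h1 := Real.sq_sqrt (hq i)
    have h2 := Real.sq_sqrt (hp i)
    linear_combination f i * h2 - f i * h1
  have cs : (Y - X)^2 ≤ d * ∑ i, ((Real.sqrt (q i) + Real.sqrt (p i)) * f i)^2 := by
    rw [key, hd]
    exact Finset.sum_mul_sq_le_sq_mul_sq _ _ _
  have bnd : ∑ i, ((Real.sqrt (q i) + Real.sqrt (p i)) * f i)^2 ≤ 2*B*(Y+X) := by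
    have hpt : ∀ i, ((Real.sqrt (q i) + Real.sqrt (p i)) * f i)^2 ≤
        2*B*(q i * f i + p i * f i) := by
      intro i
      have h1 := Real.sq_sqrt (hq i)
      have h2 := Real.sq_sqrt (hp i)
      set a := Real.sqrt (q i) with hadef
      set b := Real.sqrt (p i) with hbdef
      rw [← h1, ← h2]
      nlinarith [mul_nonneg (sq_nonneg (a - b)) (sq_nonneg (f i)),
        mul_nonneg (mul_nonneg (add_nonneg (sq_nonneg a) (sq_nonneg b)) (hf0 i))
          (sub_nonneg.2 (hfB i))]
    calc ∑ i, ((Real.sqrt (q i) + Real.sqrt (p i)) * f i)^2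
        ≤ ∑ i, 2*B*(q i * f i + p i * f i) := Finset.sum_le_sum fun i _ => hpt i
      _ = 2*B*(Y+X) := by rw [← Finset.mul_sum, Finset.sum_add_distrib, hY, hX]
  have h1 : (Y - X)^2 ≤ 2*B*d*(Y+X) := by
    calc (Y - X)^2 ≤ d * ∑ i, ((Real.sqrt (q i) + Real.sqrt (p i)) * f i)^2 := cs
      _ ≤ d * (2*B*(Y+X)) := mul_le_mul_of_nonneg_left bnd hd0
      _ = 2*B*d*(Y+X) := by ring
  have hR0 : 0 ≤ 2*(X+Y) + (2*Hr+1)^2*B*d := by positivity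
  have h2 : (2*(2*Hr+1)*(Y-X))^2 ≤ (2*(X+Y) + (2*Hr+1)^2*B*d)^2 := by
    nlinarith [h1, sq_nonneg (2*(X+Y) - (2*Hr+1)^2*B*d), sq_nonneg (2*Hr+1)]
  have hC : 2*(2*Hr+1)*(Y-X) ≤ 2*(X+Y) + (2*Hr+1)^2*B*d := by
    nlinarith [h2, hR0]
  have hHr0 : (0:ℝ) < Hr := lt_of_lt_of_le one_pos hHr
  rw [show (1 + 1/Hr) * X + (2*Hr+1)^2/(4*Hr) * B * d
      = ((4*Hr+4)*X + (2*Hr+1)^2*B*d*Hr/Hr)/(4*Hr) * 1 by field_simp]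
  rw [mul_one, le_div_iff₀ (by positivity)]
  have : (2*Hr+1)^2*B*d*Hr/Hr = (2*Hr+1)^2*B*d := by field_simp
  rw [this]
  nlinarith [hC]

lemma sum_le_comb {ι : Type*} [Fintype ι] (w v f g : ι → ℝ) (a b : ℝ)
    (hw : ∀ i, 0 ≤ w i) (h : ∀ i, v i ≤ a * f i + b * g i) :
    ∑ i, w i * v i ≤ a * ∑ i, w i * f i + b * ∑ i, w i * g i := by
  calc ∑ i, w i * v i ≤ ∑ i, w i * (a * f i + b * g i) :=
        Finset.sum_le_sum fun i _ => mul_le_mul_of_nonneg_left (h i) (hw i)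
    _ = a * ∑ i, w i * f i + b * ∑ i, w i * g i := by
        rw [Finset.mul_sum, Finset.mul_sum, ← Finset.sum_add_distrib]
        exact Finset.sum_congr rfl fun i _ => by ring

lemma main_aux (H : ℕ) (hH : 1 ≤ H)
    (π : ℕ → S → A → ℝ) (P Phat : S → A → S → ℝ) (r : S → A → ℝ)
    (hπ0 : ∀ h s a, 0 ≤ π h s a) (hπ1 : ∀ h s, ∑ a, π h s a = 1)
    (hP0 : ∀ s a s', 0 ≤ P s a s') (hP1 : ∀ s a, ∑ s', P s a s' = 1)
    (hPhat0 : ∀ s a s', 0 ≤ Phat s a s') (hPhat1 : ∀ s a, ∑ s', Phat s a s' = 1)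
    (hr0 : ∀ s a, 0 ≤ r s a) (hr1 : ∀ s a, r s a ≤ 1) :
    ∀ k h s, H - h ≤ k →
      val H π Phat r h s ≤ (1 + 1/(H:ℝ))^(H-h) *
        (val H π P r h s + (2*(H:ℝ)+1)^2/(4*(H:ℝ)) * (H:ℝ) *
          val H π P (fun s a => ∑ s', (Real.sqrt (Phat s a s') - Real.sqrt (P s a s'))^2) h s) := by
  have hH0 : (0:ℝ) < H := by exact_mod_cast Nat.lt_of_lt_of_le Nat.zero_lt_one hH
  set D : S → A → ℝ := fun s a => ∑ s', (Real.sqrt (Phat s a s') - Real.sqrt (P s a s'))^2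
    with hD
  set K : ℝ := (2*(H:ℝ)+1)^2/(4*(H:ℝ)) * (H:ℝ) with hK
  have hK0 : 0 ≤ K := by positivity
  have hD0 : ∀ s a, 0 ≤ D s a := fun s a => Finset.sum_nonneg fun i _ => sq_nonneg _
  have hc1 : (0:ℝ) ≤ 1 + 1/(H:ℝ) := by positivity
  have hW0 : ∀ h s, 0 ≤ val H π P D h s := val_nonneg H π P D hπ0 hP0 hD0
  have hV0 : ∀ h s, 0 ≤ val H π P r h s := val_nonneg H π P r hπ0 hP0 hr0
  intro k
  induction k with
  | zero =>
    intro h s hk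
    rw [_root_.val, dif_neg (by omega), _root_.val, dif_neg (by omega),
      _root_.val, dif_neg (by omega)]
    simp
  | succ k ih =>
    intro h s hk
    by_cases hlt : h < H
    · have hone : (1:ℝ) ≤ (1 + 1/(H:ℝ))^(H-h) := one_le_pow₀ (by linarith [one_div_nonneg.2 hH0.le])
      have e1 : (1 + 1/(H:ℝ)) * (1 + 1/(H:ℝ))^(H-(h+1)) = (1 + 1/(H:ℝ))^(H-h) := by
        rw [← pow_succ']
        congr 1
        omega
      -- inner bound for each action a
      have hper : ∀ a, r s a + ∑ s', Phat s a s' * val H π Phat r (h+1) s' ≤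
          (1 + 1/(H:ℝ))^(H-h) * (r s a + ∑ s', P s a s' * val H π P r (h+1) s') +
          ((1 + 1/(H:ℝ))^(H-h) * K) * (D s a + ∑ s', P s a s' * val H π P D (h+1) s') := by
        intro a
        have hub : ∀ s', val H π Phat r (h+1) s' ≤ (H:ℝ) := by
          intro s'
          refine (val_le_aux H π Phat r hπ0 hπ1 hPhat0 hPhat1 hr0 hr1 (H-(h+1)) (h+1) s' le_rfl).trans ?_
          exact_mod_cast Nat.cast_le.2 (Nat.sub_le H (h+1))
        have hlb : ∀ s', 0 ≤ val H π Phat r (h+1) s' :=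
          val_nonneg H π Phat r hπ0 hPhat0 hr0 (h+1)
        have hstep := step_bound (H:ℝ) (by exact_mod_cast hH) (P s a) (Phat s a)
          (val H π Phat r (h+1)) (H:ℝ) hH0.le (hP0 s a) (hPhat0 s a) hlb hub
        have h2 : ∑ s', P s a s' * val H π Phat r (h+1) s' ≤
            (1 + 1/(H:ℝ))^(H-(h+1)) * ∑ s', P s a s' * val H π P r (h+1) s' +
            ((1 + 1/(H:ℝ))^(H-(h+1)) * K) * ∑ s', P s a s' * val H π P D (h+1) s' := by
          apply sum_le_comb _ _ _ _ _ _ (hP0 s a)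
          intro s'
          exact (ih (h+1) s' (by omega)).trans_eq (by ring)
        have A1 := mul_le_mul_of_nonneg_left h2 hc1
        have A1' : (1 + 1/(H:ℝ)) * ((1 + 1/(H:ℝ))^(H-(h+1)) * ∑ s', P s a s' * val H π P r (h+1) s' +
            ((1 + 1/(H:ℝ))^(H-(h+1)) * K) * ∑ s', P s a s' * val H π P D (h+1) s')
            = (1 + 1/(H:ℝ))^(H-h) * ∑ s', P s a s' * val H π P r (h+1) s' +
              ((1 + 1/(H:ℝ))^(H-h) * K) * ∑ s', P s a s' * val H π P D (h+1) s' := by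
          rw [← e1]; ring
        have A2 : r s a ≤ (1 + 1/(H:ℝ))^(H-h) * r s a := le_mul_of_one_le_left (hr0 s a) hone
        have A3 : K * D s a ≤ (1 + 1/(H:ℝ))^(H-h) * (K * D s a) :=
          le_mul_of_one_le_left (mul_nonneg hK0 (hD0 s a)) hone
        have hPW : 0 ≤ ∑ s', P s a s' * val H π P D (h+1) s' :=
          Finset.sum_nonneg fun s' _ => mul_nonneg (hP0 s a s') (hW0 (h+1) s')
        have hKstep : (2*(H:ℝ)+1)^2/(4*(H:ℝ)) * (H:ℝ) * ∑ s', (Real.sqrt (Phat s a s') - Real.sqrt (P s a s'))^2 = K * D s a := by rw [hK, hD]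
        rw [hKstep] at hstep
        nlinarith [hstep, A1.trans_eq A1', A2, A3]
      rw [_root_.val, dif_pos hlt, _root_.val, dif_pos hlt, _root_.val, dif_pos hlt]
      calc ∑ a, π h s a * (r s a + ∑ s', Phat s a s' * val H π Phat r (h+1) s')
          ≤ (1 + 1/(H:ℝ))^(H-h) * ∑ a, π h s a * (r s a + ∑ s', P s a s' * val H π P r (h+1) s') +
            ((1 + 1/(H:ℝ))^(H-h) * K) * ∑ a, π h s a * (D s a + ∑ s', P s a s' * val H π P D (h+1) s') :=
            sum_le_comb _ _ _ _ _ _ (hπ0 h s) hper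
        _ = (1 + 1/(H:ℝ))^(H-h) *
            ((∑ a, π h s a * (r s a + ∑ s', P s a s' * val H π P r (h+1) s')) +
              K * ∑ a, π h s a * (D s a + ∑ s', P s a s' * val H π P D (h+1) s')) := by ring
    · rw [_root_.val, dif_neg hlt, _root_.val, dif_neg hlt, _root_.val, dif_neg hlt]
      simp

lemma one_add_inv_pow_le_three (H : ℕ) (hH : 1 ≤ H) : (1 + 1/(H:ℝ))^H ≤ 3 := by
  have hH0 : (0:ℝ) < H := by exact_mod_cast Nat.lt_of_lt_of_le Nat.zero_lt_one hH
  have h1 : (1:ℝ) + 1/H ≤ Real.exp (1/(H:ℝ)) := by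
    have := Real.add_one_le_exp (1/(H:ℝ)); linarith
  have h2 : (1 + 1/(H:ℝ))^H ≤ Real.exp (1/(H:ℝ))^H := pow_le_pow_left₀ (by positivity) h1 H
  have h3 : Real.exp (1/(H:ℝ))^H = Real.exp 1 := by
    rw [← Real.exp_nat_mul]; congr 1; field_simp
  have h4 : Real.exp 1 < 3 := by
    have := Real.exp_one_lt_d9; norm_num at this ⊢; linarith
  rw [h3] at h2; linarith

theorem hellinger_value_change_of_measure
    (H : ℕ) (hH : 1 ≤ H)
    (π : ℕ → S → A → ℝ) (P Phat : S → A → S → ℝ) (r : S → A → ℝ) (s0 : S)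
    (hπ0 : ∀ h s a, 0 ≤ π h s a) (hπ1 : ∀ h s, ∑ a, π h s a = 1)
    (hP0 : ∀ s a s', 0 ≤ P s a s') (hP1 : ∀ s a, ∑ s', P s a s' = 1)
    (hPhat0 : ∀ s a s', 0 ≤ Phat s a s') (hPhat1 : ∀ s a, ∑ s', Phat s a s' = 1)
    (hr0 : ∀ s a, 0 ≤ r s a) (hr1 : ∀ s a, r s a ≤ 1) :
    val H π Phat r 0 s0 ≤
      3 * val H π P r 0 s0 +
        9 * (H : ℝ) ^ 2 *
          val H π P
            (fun s a => ∑ s', (Real.sqrt (Phat s a s') - Real.sqrt (P s a s')) ^ 2)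
            0 s0 := by
  have hH0 : (0:ℝ) < H := by exact_mod_cast Nat.lt_of_lt_of_le Nat.zero_lt_one hH
  have hH1 : (1:ℝ) ≤ H := by exact_mod_cast hH
  set D : S → A → ℝ := fun s a => ∑ s', (Real.sqrt (Phat s a s') - Real.sqrt (P s a s'))^2
    with hD
  have hD0 : ∀ s a, 0 ≤ D s a := fun s a => Finset.sum_nonneg fun i _ => sq_nonneg _
  have key := main_aux H hH π P Phat r hπ0 hπ1 hP0 hP1 hPhat0 hPhat1 hr0 hr1 H 0 s0 (by omega)
  rw [Nat.sub_zero] at key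
  set K : ℝ := (2*(H:ℝ)+1)^2/(4*(H:ℝ)) * (H:ℝ) with hK
  have hK0 : 0 ≤ K := by positivity
  have hc3 := one_add_inv_pow_le_three H hH
  have hV0 : 0 ≤ val H π P r 0 s0 := val_nonneg H π P r hπ0 hP0 hr0 0 s0
  have hW0 : 0 ≤ val H π P D 0 s0 := val_nonneg H π P D hπ0 hP0 hD0 0 s0
  have hK3 : 3 * K ≤ 9 * (H:ℝ)^2 := by
    rw [hK]
    rw [show (2*(H:ℝ)+1)^2/(4*(H:ℝ)) * (H:ℝ) = (2*(H:ℝ)+1)^2/4 by field_simp]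
    nlinarith [sq_nonneg ((H:ℝ) - 1)]
  have h5 : (1 + 1/(H:ℝ))^H * (val H π P r 0 s0 + K * val H π P D 0 s0) ≤
      3 * (val H π P r 0 s0 + K * val H π P D 0 s0) :=
    mul_le_mul_of_nonneg_right hc3 (add_nonneg hV0 (mul_nonneg hK0 hW0))
  have h6 : (3 * K) * val H π P D 0 s0 ≤ (9 * (H:ℝ)^2) * val H π P D 0 s0 :=
    mul_le_mul_of_nonneg_right hK3 hW0
  nlinarith [key, h5, h6]
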